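/- For k > 0 and a rank k symmetric Schwartz tensor field f on ℝⁿ, one has J_{ij}(J^{m,k}f) = J^{m,k−1}h_{ij}, where h_{ij} is the rank k−1 symmetric tensor field with components (h_{ij})_{i₁…i_{k−1}} = k(∂f_{i₁…i_{k−1}j}/∂x^i − ∂f_{i₁…i_{k−1}i}/∂x^j). -/

import Mathlib

/-- Partial derivative in the `i`-th `x`-direction for functions of `(x,ξ) ∈ ℝⁿ×ℝⁿ`. -/
noncomputable def pdx (n : ℕ) (i : Fin n) (ψ : (Fin n → ℝ) × (Fin n → ℝ) → ℝ) :
    (Fin n → ℝ) × (Fin n → ℝ) → ℝ :=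
  fun p => fderiv ℝ ψ p (Pi.single i 1, 0)

/-- Partial derivative in the `i`-th `ξ`-direction. -/
noncomputable def pdxi (n : ℕ) (i : Fin n) (ψ : (Fin n → ℝ) × (Fin n → ℝ) → ℝ) :
    (Fin n → ℝ) × (Fin n → ℝ) → ℝ :=
  fun p => fderiv ℝ ψ p (0, Pi.single i 1)

/-- The operator `⟨ξ,∂ₓ⟩ = Σ_p ξ^p ∂/∂x^p`. -/
noncomputable def Dx (n : ℕ) (ψ : (Fin n → ℝ) × (Fin n → ℝ) → ℝ) :
    (Fin n → ℝ) × (Fin n → ℝ) → ℝ :=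
  fun p => ∑ q : Fin n, p.2 q * pdx n q ψ p

/-- Mixed iterated derivative `∂^k/∂x^{j₁}…∂x^{j_q}∂ξ^{j_{q+1}}…∂ξ^{j_k}` along the
multi-index `I`: the first `q` slots are `x`-derivatives, the rest `ξ`-derivatives. -/
noncomputable def mixedD (n k : ℕ) (q : ℕ) (I : Fin k → Fin n)
    (ψ : (Fin n → ℝ) × (Fin n → ℝ) → ℝ) : (Fin n → ℝ) × (Fin n → ℝ) → ℝ :=
  (List.finRange k).foldr
    (fun (a : Fin k) acc => if (a : ℕ) < q then pdx n (I a) acc else pdxi n (I a) acc) ψ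

/-- Symmetrization (averaging over permutations) of a tensor-indexed family of functions. -/
noncomputable def symAvg (n k : ℕ)
    (T : (Fin k → Fin n) → (Fin n → ℝ) × (Fin n → ℝ) → ℝ) (I : Fin k → Fin n) :
    (Fin n → ℝ) × (Fin n → ℝ) → ℝ :=
  fun p => ((Nat.factorial k : ℝ))⁻¹ * ∑ π : Equiv.Perm (Fin k), T (I ∘ π) p

/-- The John operator `J_{ij} = ∂²/∂x^i∂ξ^j − ∂²/∂x^j∂ξ^i`. -/
noncomputable def john (n : ℕ) (i j : Fin n) (ψ : (Fin n → ℝ) × (Fin n → ℝ) → ℝ) :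
    (Fin n → ℝ) × (Fin n → ℝ) → ℝ :=
  fun p => pdx n i (pdxi n j ψ) p - pdx n j (pdxi n i ψ) p

/-- Iterated John operators `J_{i₁j₁}⋯J_{i_rj_r}`. -/
noncomputable def iterJohn (n r : ℕ) (I J : Fin r → Fin n)
    (ψ : (Fin n → ℝ) × (Fin n → ℝ) → ℝ) : (Fin n → ℝ) × (Fin n → ℝ) → ℝ :=
  (List.finRange r).foldr (fun a acc => john n (I a) (J a) acc) ψ

open MeasureTheory

/-- `(J^{m,k} f)(x,ξ) = ∫ t^m ⟨f(x+tξ), ξ^k⟩ dt` for a rank-`k` tensor field `f`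
given by its component functions. -/
noncomputable def JmomT (n m k : ℕ) (f : (Fin k → Fin n) → (Fin n → ℝ) → ℝ) :
    (Fin n → ℝ) × (Fin n → ℝ) → ℝ :=
  fun p => ∫ t : ℝ, t ^ m *
    ∑ I : Fin k → Fin n, f I (p.1 + t • p.2) * ∏ a : Fin k, p.2 (I a)


/-!
On the open set `ξ ≠ 0`, `J^{m,k+1} f (x, ξ) = ∑_I ξ^I ∫ t^m f_I(x + tξ) dt`, and Schwartz decay
along the lines `t ↦ x + tξ` (locally uniform in `(x, ξ)`) allows differentiation under the
integral: `∂/∂x^i` falls on `f_I`, while `∂/∂ξ^j` either falls on the integrand, giving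
`∫ t^{m+1} ∂_j f_I`, or on the monomial `ξ^I`. In `J_{ij}` the terms in which both derivatives
fall on `f` cancel by the symmetry of second derivatives. In the remaining terms `∂ξ^I/∂ξ^j` is
contracted against the symmetric tensor `∂_i f`; each of the `k + 1` slots of `I` contributes
the same amount, which produces `J^{m,k} h_{ij}`.
-/

open Metric LineDeriv
open scoped SchwartzMap

def lineEval {E : Type*} [NormedAddCommGroup E] [NormedSpace ℝ E] (t : ℝ) : E × E →L[ℝ] E :=
  ContinuousLinearMap.fst ℝ E E + t • ContinuousLinearMap.snd ℝ E E

@[simp]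
theorem lineEval_apply {E : Type*} [NormedAddCommGroup E] [NormedSpace ℝ E] (t : ℝ) (p : E × E) :
    lineEval t p = p.1 + t • p.2 :=
  rfl

theorem norm_lineEval_le {E : Type*} [NormedAddCommGroup E] [NormedSpace ℝ E] (t : ℝ) :
    ‖(lineEval t : E × E →L[ℝ] E)‖ ≤ 1 + |t| := by
  calc ‖(lineEval t : E × E →L[ℝ] E)‖
      ≤ ‖ContinuousLinearMap.fst ℝ E E‖ + |t| * ‖ContinuousLinearMap.snd ℝ E E‖ :=
        (norm_add_le _ _).trans_eq (by rw [norm_smul, Real.norm_eq_abs])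
    _ ≤ 1 + |t| * 1 := by
        gcongr
        exacts [ContinuousLinearMap.norm_fst_le .., ContinuousLinearMap.norm_snd_le ..]
    _ = 1 + |t| := by ring

namespace SchwartzMap

variable {E F ι : Type*} [NormedAddCommGroup E] [NormedSpace ℝ E]
  [NormedAddCommGroup F] [NormedSpace ℝ F]

theorem lineDerivOp_comm (φ : 𝓢(E, F)) (v w : E) : ∂_{v} (∂_{w} φ) = ∂_{w} (∂_{v} φ) := by
  ext x
  have hsymm : IsSymmSndFDerivAt ℝ (⇑φ) x :=
    (φ.smooth ⊤).contDiffAt.isSymmSndFDerivAt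
      (by simpa using ENat.natCast_le_of_coe_top_le_withTop le_rfl 2)
  have hiter : ∀ a b : E, ∂_{a} (∂_{b} φ) x = iteratedFDeriv ℝ 2 φ x ![a, b] := fun a b =>
    iteratedLineDerivOp_eq_iteratedFDeriv (m := ![a, b])
  rw [hiter, hiter, hsymm.iteratedFDeriv_cons]

theorem exists_bound_along_lines (φ : 𝓢(E, F)) (K d : ℕ) {c : ℝ} (hc : 0 < c) (M : ℝ) :
    ∃ B : ℝ, ∀ (t : ℝ) (x ξ : E), ‖x‖ ≤ M → c ≤ ‖ξ‖ →
      (1 + |t|) ^ K * ‖iteratedFDeriv ℝ d φ (x + t • ξ)‖ ≤ B / (1 + t ^ 2) := by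
  obtain ⟨C, hC⟩ : ∃ C, ∀ y : E, (1 + ‖y‖) ^ (K + 2) * ‖iteratedFDeriv ℝ d φ y‖ ≤ C :=
    ⟨_, one_add_le_sup_seminorm_apply (𝕜 := ℝ) (m := (K + 2, d)) le_rfl le_rfl φ⟩
  set a := (1 + |M|) / min 1 c
  refine ⟨a ^ (K + 2) * C, fun t x ξ hx hξ => ?_⟩
  set y := x + t • ξ
  -- `1 + |t| ≲ 1 + ‖y‖` because `‖y‖ ≥ c |t| - M`
  have hty : 1 + |t| ≤ a * (1 + ‖y‖) := by
    have hy : c * |t| ≤ ‖y‖ + M := by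
      have := norm_sub_le y x
      rw [show y - x = t • ξ by simp [y], norm_smul, Real.norm_eq_abs] at this
      nlinarith [abs_nonneg t]
    rw [div_mul_eq_mul_div, le_div_iff₀ (lt_min one_pos hc)]
    nlinarith [min_le_left 1 c, min_le_right 1 c, abs_nonneg t, le_abs_self M, norm_nonneg y,
      abs_nonneg M]
  rw [le_div_iff₀ (by positivity)]
  calc (1 + |t|) ^ K * ‖iteratedFDeriv ℝ d φ y‖ * (1 + t ^ 2)
      ≤ (1 + |t|) ^ K * ‖iteratedFDeriv ℝ d φ y‖ * (1 + |t|) ^ 2 := by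
        gcongr; nlinarith [sq_abs t, abs_nonneg t]
    _ = (1 + |t|) ^ (K + 2) * ‖iteratedFDeriv ℝ d φ y‖ := by ring
    _ ≤ (a * (1 + ‖y‖)) ^ (K + 2) * ‖iteratedFDeriv ℝ d φ y‖ := by gcongr
    _ = a ^ (K + 2) * ((1 + ‖y‖) ^ (K + 2) * ‖iteratedFDeriv ℝ d φ y‖) := by
        rw [mul_pow]; ring
    _ ≤ a ^ (K + 2) * C := by gcongr; exact hC y

noncomputable def lineMoment (φ : 𝓢(E, F)) (r : ℕ) (p : E × E) : F :=
  ∫ t : ℝ, t ^ r • φ (p.1 + t • p.2)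

theorem integrable_pow_smul_comp_line (φ : 𝓢(E, F)) (r : ℕ) (x : E) {ξ : E} (hξ : ξ ≠ 0) :
    Integrable (fun t : ℝ => t ^ r • φ (x + t • ξ)) := by
  obtain ⟨B, hB⟩ := φ.exists_bound_along_lines r 0 (norm_pos_iff.mpr hξ) ‖x‖
  refine (integrable_inv_one_add_sq.const_mul B).mono' (by fun_prop)
    (Filter.Eventually.of_forall fun t => ?_)
  refine le_trans ?_ ((hB t x ξ le_rfl le_rfl).trans_eq (div_eq_mul_inv _ _))
  rw [norm_iteratedFDeriv_zero, norm_smul, norm_pow, Real.norm_eq_abs]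
  gcongr
  linarith [abs_nonneg t]

theorem lineMoment_smul (c : ℝ) (φ : 𝓢(E, F)) (r : ℕ) (p : E × E) :
    (c • φ).lineMoment r p = c • φ.lineMoment r p := by
  simp only [lineMoment, smul_apply, smul_comm _ c]
  exact integral_smul c _

theorem lineMoment_sub (φ ψ : 𝓢(E, F)) (r : ℕ) {p : E × E} (hp : p.2 ≠ 0) :
    (φ - ψ).lineMoment r p = φ.lineMoment r p - ψ.lineMoment r p := by
  simp only [lineMoment, sub_apply, smul_sub]
  exact integral_sub (φ.integrable_pow_smul_comp_line r p.1 hp)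
    (ψ.integrable_pow_smul_comp_line r p.1 hp)

theorem continuous_lineMoment_integrand_fderiv (φ : 𝓢(E, F)) (r : ℕ) (p : E × E) :
    Continuous fun t : ℝ => t ^ r • (fderiv ℝ φ (p.1 + t • p.2)).comp (lineEval t) := by
  have := (φ.smooth ⊤).continuous_fderiv (by simp)
  unfold lineEval
  fun_prop

theorem exists_bound_lineMoment_integrand_fderiv (φ : 𝓢(E, F)) (r : ℕ) (p₀ : E × E)
    (hp₀ : p₀.2 ≠ 0) :
    ∃ B : ℝ, ∀ t : ℝ, ∀ p ∈ ball p₀ (‖p₀.2‖ / 2),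
      ‖t ^ r • (fderiv ℝ φ (p.1 + t • p.2)).comp (lineEval t)‖ ≤ B / (1 + t ^ 2) := by
  have hε : 0 < ‖p₀.2‖ / 2 := by have := norm_pos_iff.mpr hp₀; positivity
  obtain ⟨B, hB⟩ := φ.exists_bound_along_lines (r + 1) 1 hε (‖p₀.1‖ + ‖p₀.2‖ / 2)
  refine ⟨B, fun t p hp => le_trans ?_ (hB t p.1 p.2 ?_ ?_)⟩
  · calc ‖t ^ r • (fderiv ℝ φ (p.1 + t • p.2)).comp (lineEval t)‖
        ≤ |t| ^ r * (‖fderiv ℝ φ (p.1 + t • p.2)‖ * (1 + |t|)) := by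
          rw [norm_smul, norm_pow, Real.norm_eq_abs]
          gcongr
          exact (ContinuousLinearMap.opNorm_comp_le _ _).trans
            (by gcongr; exact norm_lineEval_le t)
      _ ≤ (1 + |t|) ^ r * (‖fderiv ℝ φ (p.1 + t • p.2)‖ * (1 + |t|)) := by
          gcongr; linarith [abs_nonneg t]
      _ = _ := by rw [norm_iteratedFDeriv_one]; ring
  · have := (norm_fst_le (p - p₀)).trans (mem_ball_iff_norm.mp hp).le
    have := norm_sub_norm_le p.1 p₀.1
    simp only [Prod.fst_sub] at *
    linarith
  · have := (norm_snd_le (p - p₀)).trans (mem_ball_iff_norm.mp hp).le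
    have := norm_sub_norm_le p₀.2 p.2
    rw [norm_sub_rev] at this
    simp only [Prod.snd_sub] at *
    linarith

theorem hasFDerivAt_lineMoment [CompleteSpace F] (φ : 𝓢(E, F)) (r : ℕ) {p : E × E}
    (hp : p.2 ≠ 0) :
    HasFDerivAt (φ.lineMoment r)
      (∫ t : ℝ, t ^ r • (fderiv ℝ φ (p.1 + t • p.2)).comp (lineEval t)) p := by
  obtain ⟨B, hB⟩ := φ.exists_bound_lineMoment_integrand_fderiv r p hp
  have hε : 0 < ‖p.2‖ / 2 := by have := norm_pos_iff.mpr hp; positivity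
  refine hasFDerivAt_integral_of_dominated_of_fderiv_le (ball_mem_nhds p hε)
    (Filter.Eventually.of_forall fun q => by fun_prop)
    (φ.integrable_pow_smul_comp_line r p.1 hp)
    (φ.continuous_lineMoment_integrand_fderiv r p).aestronglyMeasurable
    (Filter.Eventually.of_forall fun t q hq => hB t q hq)
    (integrable_inv_one_add_sq.const_mul B |>.congr (by simp [div_eq_mul_inv]))
    (Filter.Eventually.of_forall fun t q _ => ?_)
  exact ((φ.hasFDerivAt _).comp q (lineEval t).hasFDerivAt).const_smul (t ^ r)

theorem fderiv_lineMoment_apply [CompleteSpace F] (φ : 𝓢(E, F)) (r : ℕ) {p : E × E}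
    (hp : p.2 ≠ 0) (v w : E) :
    fderiv ℝ (φ.lineMoment r) p (v, w)
      = (∂_{v} φ).lineMoment r p + (∂_{w} φ).lineMoment (r + 1) p := by
  obtain ⟨B, hB⟩ := φ.exists_bound_lineMoment_integrand_fderiv r p hp
  have hint : Integrable fun t : ℝ => t ^ r • (fderiv ℝ φ (p.1 + t • p.2)).comp (lineEval t) :=
    (integrable_inv_one_add_sq.const_mul B).mono'
      (φ.continuous_lineMoment_integrand_fderiv r p).aestronglyMeasurable
      (Filter.Eventually.of_forall fun t => (hB t p (mem_ball_self (by
        have := norm_pos_iff.mpr hp; positivity))).trans_eq (div_eq_mul_inv _ _))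
  rw [(φ.hasFDerivAt_lineMoment r hp).fderiv, ContinuousLinearMap.integral_apply hint,
    lineMoment, lineMoment, ← integral_add (∂_{v} φ |>.integrable_pow_smul_comp_line r p.1 hp)
      (∂_{w} φ |>.integrable_pow_smul_comp_line (r + 1) p.1 hp)]
  congr 1 with t
  simp [lineDerivOp_apply_eq_fderiv, pow_succ, mul_smul, smul_add]

variable [Fintype ι]

noncomputable def momentSum (c : ι → E → ℝ) (g : ι → 𝓢(E, F)) (r : ℕ) (p : E × E) : F :=
  ∑ a, c a p.2 • (g a).lineMoment r p

theorem momentSum_smul (c : ι → E → ℝ) (s : ℝ) (g : ι → 𝓢(E, F)) (r : ℕ) (p : E × E) :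
    momentSum c (fun a => s • g a) r p = s • momentSum c g r p := by
  simp only [momentSum, lineMoment_smul, Finset.smul_sum, smul_comm s]

theorem momentSum_sub (c : ι → E → ℝ) (g h : ι → 𝓢(E, F)) (r : ℕ) {p : E × E}
    (hp : p.2 ≠ 0) :
    momentSum c (fun a => g a - h a) r p = momentSum c g r p - momentSum c h r p := by
  simp only [momentSum, lineMoment_sub _ _ r hp, smul_sub, Finset.sum_sub_distrib]

variable [CompleteSpace F] {c : ι → E → ℝ}

theorem hasFDerivAt_momentSum (g : ι → 𝓢(E, F)) (r : ℕ) {p : E × E}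
    (hc : ∀ a, DifferentiableAt ℝ (c a) p.2) (hp : p.2 ≠ 0) :
    HasFDerivAt (momentSum c g r)
      (∑ a, (c a p.2 • fderiv ℝ ((g a).lineMoment r) p
        + ((fderiv ℝ (c a) p.2).comp (ContinuousLinearMap.snd ℝ E E)).smulRight
            ((g a).lineMoment r p))) p :=
  HasFDerivAt.fun_sum fun a _ => ((hc a).hasFDerivAt.comp p hasFDerivAt_snd).smul
    ((g a).hasFDerivAt_lineMoment r hp).differentiableAt.hasFDerivAt

theorem differentiableAt_momentSum (g : ι → 𝓢(E, F)) (r : ℕ) {p : E × E}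
    (hc : ∀ a, DifferentiableAt ℝ (c a) p.2) (hp : p.2 ≠ 0) :
    DifferentiableAt ℝ (momentSum c g r) p :=
  (hasFDerivAt_momentSum g r hc hp).differentiableAt

theorem fderiv_momentSum_apply (g : ι → 𝓢(E, F)) (r : ℕ) {p : E × E}
    (hc : ∀ a, DifferentiableAt ℝ (c a) p.2) (hp : p.2 ≠ 0) (v w : E) :
    fderiv ℝ (momentSum c g r) p (v, w)
      = momentSum c (fun a => ∂_{v} (g a)) r p + momentSum c (fun a => ∂_{w} (g a)) (r + 1) p
        + momentSum (fun a ξ => fderiv ℝ (c a) ξ w) g r p := by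
  simp only [(hasFDerivAt_momentSum g r hc hp).fderiv, momentSum, ← Finset.sum_add_distrib,
    sum_apply]
  refine Finset.sum_congr rfl fun a _ => ?_
  simp [fderiv_lineMoment_apply _ r hp, smul_add, add_assoc]

end SchwartzMap

section CoordProd

variable {ι : Type*} [Fintype ι] {k : ℕ}

def coordProd (I : Fin k → ι) (ξ : ι → ℝ) : ℝ := ∏ a, ξ (I a)

theorem contDiff_coordProd (I : Fin k → ι) : ContDiff ℝ ⊤ (coordProd I) := by
  unfold coordProd
  fun_prop

theorem fderiv_coordProd_apply_single [DecidableEq ι] (I : Fin (k + 1) → ι) (ξ : ι → ℝ) (j : ι) :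
    fderiv ℝ (coordProd I) ξ (Pi.single j 1)
      = ∑ b, (Pi.single j 1 : ι → ℝ) (I b) * coordProd (I ∘ b.succAbove) ξ := by
  have hderiv : HasFDerivAt (coordProd I)
      (∑ b, (∏ a ∈ Finset.univ.erase b, ξ (I a)) •
        ContinuousLinearMap.proj (R := ℝ) (φ := fun _ : ι => ℝ) (I b)) ξ :=
    HasFDerivAt.finsetProd (u := Finset.univ) (g := fun a (ξ : ι → ℝ) => ξ (I a))
      fun a _ => (ContinuousLinearMap.proj (R := ℝ) (φ := fun _ : ι => ℝ) (I a)).hasFDerivAt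
  rw [hderiv.fderiv, sum_apply]
  refine Finset.sum_congr rfl fun b _ => ?_
  rw [← Finset.compl_singleton, ← Fin.image_succAbove_univ,
    Finset.prod_image fun _ _ _ _ h => Fin.succAbove_right_injective h]
  simp [coordProd, mul_comm]

theorem differentiable_fderiv_coordProd_apply (I : Fin k → ι) (w : ι → ℝ) :
    Differentiable ℝ fun ξ => fderiv ℝ (coordProd I) ξ w :=
  (((contDiff_coordProd I).fderiv_right (m := 1) le_top).clm_apply contDiff_const).differentiable
    one_ne_zero

-- Each of the `k + 1` slots of `I` contributes the same sum, by the symmetry of `c`.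
theorem sum_fderiv_coordProd_smul [DecidableEq ι] {M : Type*} [AddCommGroup M] [Module ℝ M]
    (c : (Fin (k + 1) → ι) → M)
    (hc : ∀ (I : Fin (k + 1) → ι) (π : Equiv.Perm (Fin (k + 1))), c (I ∘ π) = c I)
    (ξ : ι → ℝ) (j : ι) :
    ∑ I, fderiv ℝ (coordProd I) ξ (Pi.single j 1) • c I
      = ((k : ℝ) + 1) • ∑ I' : Fin k → ι, coordProd I' ξ • c (Fin.snoc I' j) := by
  have hcons : ∀ (b : Fin (k + 1)) y (I' : Fin k → ι), c (b.insertNth y I') = c (Fin.snoc I' y) :=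
    fun b y I' => by
      rw [← Fin.cons_comp_cycleRange, hc, ← Fin.insertNth_last', ← Fin.cons_comp_cycleRange, hc]
  have hslot : ∀ b : Fin (k + 1),
      ∑ I : Fin (k + 1) → ι, ((Pi.single j 1 : ι → ℝ) (I b) * coordProd (I ∘ b.succAbove) ξ) • c I
        = ∑ I' : Fin k → ι, coordProd I' ξ • c (Fin.snoc I' j) := by
    intro b
    rw [← (Fin.insertNthEquiv (fun _ => ι) b).sum_comp, Fintype.sum_prod_type, Finset.sum_comm]
    refine Finset.sum_congr rfl fun I' _ => ?_
    simp [Fin.insertNthEquiv, Pi.single_apply, hcons, Function.comp_def, ite_smul]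
  simp only [fderiv_coordProd_apply_single, Finset.sum_smul]
  rw [Finset.sum_comm, Finset.sum_congr rfl fun b _ => hslot b, Finset.sum_const,
    Finset.card_univ, Fintype.card_fin, ← Nat.cast_smul_eq_nsmul ℝ]
  push_cast
  rfl

theorem SchwartzMap.momentSum_fderiv_coordProd [DecidableEq ι] {F : Type*}
    [NormedAddCommGroup F] [NormedSpace ℝ F] (g : (Fin (k + 1) → ι) → 𝓢(ι → ℝ, F))
    (hg : ∀ (I : Fin (k + 1) → ι) (π : Equiv.Perm (Fin (k + 1))), g (I ∘ π) = g I)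
    (r : ℕ) (p : (ι → ℝ) × (ι → ℝ)) (j : ι) :
    momentSum (fun I ξ => fderiv ℝ (coordProd I) ξ (Pi.single j 1)) g r p
      = ((k : ℝ) + 1) • momentSum coordProd (fun I' => g (Fin.snoc I' j)) r p :=
  sum_fderiv_coordProd_smul (fun I => (g I).lineMoment r p) (fun I π => by rw [hg]) p.2 j

end CoordProd

open SchwartzMap

section JohnOperator

variable {n : ℕ}

theorem Filter.EventuallyEq.pdx_eq {ψ₁ ψ₂ : (Fin n → ℝ) × (Fin n → ℝ) → ℝ}
    {p : (Fin n → ℝ) × (Fin n → ℝ)} (h : ψ₁ =ᶠ[nhds p] ψ₂) (i : Fin n) :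
    pdx n i ψ₁ p = pdx n i ψ₂ p := by
  rw [pdx, pdx, h.fderiv_eq]

theorem Filter.EventuallyEq.pdxi_eq {ψ₁ ψ₂ : (Fin n → ℝ) × (Fin n → ℝ) → ℝ}
    {p : (Fin n → ℝ) × (Fin n → ℝ)} (h : ψ₁ =ᶠ[nhds p] ψ₂) (j : Fin n) :
    pdxi n j ψ₁ p = pdxi n j ψ₂ p := by
  rw [pdxi, pdxi, h.fderiv_eq]

theorem pdx_add {ψ₁ ψ₂ : (Fin n → ℝ) × (Fin n → ℝ) → ℝ} {p : (Fin n → ℝ) × (Fin n → ℝ)}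
    (h₁ : DifferentiableAt ℝ ψ₁ p) (h₂ : DifferentiableAt ℝ ψ₂ p) (i : Fin n) :
    pdx n i (ψ₁ + ψ₂) p = pdx n i ψ₁ p + pdx n i ψ₂ p := by
  rw [pdx, fderiv_add h₁ h₂]
  rfl

theorem JmomT_eq_momentSum (m K : ℕ) (f : (Fin K → Fin n) → 𝓢(Fin n → ℝ, ℝ))
    {p : (Fin n → ℝ) × (Fin n → ℝ)} (hp : p.2 ≠ 0) :
    JmomT n m K (fun I => f I) p = momentSum coordProd f m p := by
  simp only [JmomT, momentSum, lineMoment, smul_eq_mul, ← integral_const_mul]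
  rw [← integral_finsetSum]
  · congr with t
    simp only [Finset.mul_sum, coordProd]
    exact Finset.sum_congr rfl fun I _ => by ring
  · exact fun I _ => ((f I).integrable_pow_smul_comp_line m p.1 hp).const_mul _

theorem JmomT_eventuallyEq_momentSum (m K : ℕ) (f : (Fin K → Fin n) → 𝓢(Fin n → ℝ, ℝ))
    {p : (Fin n → ℝ) × (Fin n → ℝ)} (hp : p.2 ≠ 0) :
    JmomT n m K (fun I => f I) =ᶠ[nhds p] momentSum coordProd f m := by
  filter_upwards [(isOpen_compl_singleton.preimage continuous_snd).mem_nhds hp] with q hq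
  exact JmomT_eq_momentSum m K f hq

variable {ι : Type*} [Fintype ι] {c : ι → (Fin n → ℝ) → ℝ}

theorem pdx_momentSum (g : ι → 𝓢(Fin n → ℝ, ℝ)) (r : ℕ) {p : (Fin n → ℝ) × (Fin n → ℝ)}
    (hc : ∀ a, DifferentiableAt ℝ (c a) p.2) (hp : p.2 ≠ 0) (i : Fin n) :
    pdx n i (momentSum c g r) p
      = momentSum c (fun a => ∂_{(Pi.single i 1 : Fin n → ℝ)} (g a)) r p := by
  simp [pdx, fderiv_momentSum_apply g r hc hp, momentSum, lineMoment]

theorem pdxi_momentSum (g : ι → 𝓢(Fin n → ℝ, ℝ)) (r : ℕ) {p : (Fin n → ℝ) × (Fin n → ℝ)}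
    (hc : ∀ a, DifferentiableAt ℝ (c a) p.2) (hp : p.2 ≠ 0) (j : Fin n) :
    pdxi n j (momentSum c g r) p
      = momentSum c (fun a => ∂_{(Pi.single j 1 : Fin n → ℝ)} (g a)) (r + 1) p
        + momentSum (fun a ξ => fderiv ℝ (c a) ξ (Pi.single j 1 : Fin n → ℝ)) g r p := by
  simp [pdxi, fderiv_momentSum_apply g r hc hp, momentSum, lineMoment]

theorem pdx_pdxi_JmomT (m K : ℕ) (f : (Fin K → Fin n) → 𝓢(Fin n → ℝ, ℝ))
    {p : (Fin n → ℝ) × (Fin n → ℝ)} (hp : p.2 ≠ 0) (i j : Fin n) :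
    pdx n i (pdxi n j (JmomT n m K (fun I => f I))) p
      = momentSum coordProd
          (fun I => ∂_{(Pi.single i 1 : Fin n → ℝ)} (∂_{(Pi.single j 1 : Fin n → ℝ)} (f I)))
          (m + 1) p
        + momentSum (fun I ξ => fderiv ℝ (coordProd I) ξ (Pi.single j 1))
          (fun I => ∂_{(Pi.single i 1 : Fin n → ℝ)} (f I)) m p := by
  have hc : ∀ (I : Fin K → Fin n) q, DifferentiableAt ℝ (coordProd I) q := fun I =>
    (contDiff_coordProd I).differentiable (by simp)
  have hc' : ∀ (I : Fin K → Fin n) q,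
      DifferentiableAt ℝ (fun ξ => fderiv ℝ (coordProd I) ξ (Pi.single j 1)) q :=
    fun I => differentiable_fderiv_coordProd_apply I _
  have hpdxi : pdxi n j (JmomT n m K (fun I => f I)) =ᶠ[nhds p]
      momentSum coordProd (fun I => ∂_{(Pi.single j 1 : Fin n → ℝ)} (f I)) (m + 1)
        + momentSum (fun I ξ => fderiv ℝ (coordProd I) ξ (Pi.single j 1)) f m := by
    filter_upwards [(isOpen_compl_singleton.preimage continuous_snd).mem_nhds hp] with q hq
    rw [(JmomT_eventuallyEq_momentSum m K f hq).pdxi_eq, pdxi_momentSum f m (hc · _) hq]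
    rfl
  rw [hpdxi.pdx_eq, pdx_add (differentiableAt_momentSum _ _ (hc · _) hp)
      (differentiableAt_momentSum _ _ (hc' · _) hp),
    pdx_momentSum _ _ (hc · _) hp, pdx_momentSum _ _ (hc' · _) hp]

theorem john_JmomT (m K : ℕ) (f : (Fin K → Fin n) → 𝓢(Fin n → ℝ, ℝ))
    {p : (Fin n → ℝ) × (Fin n → ℝ)} (hp : p.2 ≠ 0) (i j : Fin n) :
    john n i j (JmomT n m K (fun I => f I)) p
      = momentSum (fun I ξ => fderiv ℝ (coordProd I) ξ (Pi.single j 1))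
          (fun I => ∂_{(Pi.single i 1 : Fin n → ℝ)} (f I)) m p
        - momentSum (fun I ξ => fderiv ℝ (coordProd I) ξ (Pi.single i 1))
          (fun I => ∂_{(Pi.single j 1 : Fin n → ℝ)} (f I)) m p := by
  rw [john, pdx_pdxi_JmomT m K f hp, pdx_pdxi_JmomT m K f hp]
  simp only [lineDerivOp_comm _ (Pi.single j 1 : Fin n → ℝ) (Pi.single i 1)]
  abel

end JohnOperator

/-- Formula (2.9): for a rank `k+1` symmetric Schwartz tensor field `f`,
`J_{ij}(J^{m,k+1} f) = J^{m,k} h_{ij}`, where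
`(h_{ij})_{i₁…i_k} = (k+1)(∂f_{i₁…i_k j}/∂x^i − ∂f_{i₁…i_k i}/∂x^j)`. -/
theorem stmt7 (n m k : ℕ) (f : (Fin (k + 1) → Fin n) → SchwartzMap (Fin n → ℝ) ℝ)
    (hsym : ∀ (I : Fin (k + 1) → Fin n) (π : Equiv.Perm (Fin (k + 1))), f (I ∘ π) = f I)
    (i j : Fin n) :
    ∀ x ξ : Fin n → ℝ, ξ ≠ 0 →
      john n i j (JmomT n m (k + 1) (fun a => ⇑(f a))) (x, ξ)
        = JmomT n m k (fun I y =>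
            ((k : ℝ) + 1) *
              (fderiv ℝ (f (Fin.snoc I j)) y (Pi.single i 1)
                - fderiv ℝ (f (Fin.snoc I i)) y (Pi.single j 1))) (x, ξ) := by
  intro x ξ hξ
  have hderiv_sym : ∀ (l : Fin n) (I : Fin (k + 1) → Fin n) (π : Equiv.Perm (Fin (k + 1))),
      ∂_{(Pi.single l 1 : Fin n → ℝ)} (f (I ∘ π)) = ∂_{(Pi.single l 1 : Fin n → ℝ)} (f I) :=
    fun l I π => by rw [hsym]
  have hrhs : (fun I y => ((k : ℝ) + 1) *
      (fderiv ℝ (f (Fin.snoc I j)) y (Pi.single i 1)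
        - fderiv ℝ (f (Fin.snoc I i)) y (Pi.single j 1)))
      = fun I => ⇑(((k : ℝ) + 1) • (∂_{(Pi.single i 1 : Fin n → ℝ)} (f (Fin.snoc I j))
          - ∂_{(Pi.single j 1 : Fin n → ℝ)} (f (Fin.snoc I i)))) := by
    ext I y
    simp [lineDerivOp_apply_eq_fderiv]
  rw [john_JmomT m (k + 1) f hξ, momentSum_fderiv_coordProd _ (hderiv_sym i),
    momentSum_fderiv_coordProd _ (hderiv_sym j), hrhs, JmomT_eq_momentSum m k _ hξ,
    momentSum_smul, momentSum_sub _ _ _ _ hξ, smul_sub]
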